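/- Let a_r, w_r, w_x be constants with 0 < w_r < a_r and 0 < w_x, and let σ > 0. Define the ring–line intersection area A_rl(r_c) = A(x₁, r_c + σw_r) − A(x₂, r_c + σw_r) − A(x₁, r_c − σw_r) + A(x₂, r_c − σw_r), where x₁ = x_c − σw_x and x₂ = x_c + σw_x. Suppose ψ = x_c/σ satisfies |ψ| + w_x < a_r − w_r. Then the derivative dA_rl/dr_c evaluated at r_c = σ·a_r equals σ·F(ψ), where F(ψ) = 2(a_r+w_r)[arccos((ψ−w_x)/(a_r+w_r)) − arccos((ψ+w_x)/(a_r+w_r))] − 2(a_r−w_r)[arccos((ψ−w_x)/(a_r−w_r)) − arccos((ψ+w_x)/(a_r−w_r))] does not depend on σ. Consequently the set of ratios ψ = x_c/σ at which this derivative vanishes is independent of σ, i.e., the ratio between the optimal ring scale and the width of an anisotropic (two parallel lines) feature is independent of the feature size (Proposition 1). -/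

import Mathlib

open Real Set

/-- Area of the circular segment of a disk of radius `r` cut off by
the vertical line at abscissa `x`. -/
noncomputable def A (x r : ℝ) : ℝ :=
  r ^ 2 * Real.arccos (x / r) - x * Real.sqrt (r ^ 2 - x ^ 2)

/-- Intersection area between the binary annulus with inner radius
`r_c - σ*w_r`, outer radius `r_c + σ*w_r`, and the binary strip between the
abscissae `x_c - σ*w_x` and `x_c + σ*w_x`. -/
noncomputable def Arl (a_r w_r w_x σ x_c : ℝ) (r_c : ℝ) : ℝ :=
  A (x_c - σ * w_x) (r_c + σ * w_r) - A (x_c + σ * w_x) (r_c + σ * w_r)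
    - A (x_c - σ * w_x) (r_c - σ * w_r) + A (x_c + σ * w_x) (r_c - σ * w_r)

/-- The σ-independent form of the derivative of the ring–line intersection
area with respect to the ring center radius, expressed in the ratio `ψ = x_c/σ`. -/
noncomputable def F (a_r w_r w_x ψ : ℝ) : ℝ :=
  2 * (a_r + w_r) * (Real.arccos ((ψ - w_x) / (a_r + w_r)) -
      Real.arccos ((ψ + w_x) / (a_r + w_r))) -
    2 * (a_r - w_r) * (Real.arccos ((ψ - w_x) / (a_r - w_r)) -
      Real.arccos ((ψ + w_x) / (a_r - w_r)))

/-! Moving the ring radius by `dr` changes the area of each circular segment by its arc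
length `2 r arccos (x / r)` times `dr`, so `dA_rl/dr_c` is a signed sum of four arc lengths.
At `r_c = σ a_r` every abscissa and every radius is `σ` times a `σ`-free quantity, so the
arccos arguments do not depend on `σ` and the arc lengths are `σ` times `σ`-free lengths. -/

lemma sqrt_one_sub_div_sq {x r : ℝ} (hr : 0 < r) :
    √(1 - (x / r) ^ 2) = √(r ^ 2 - x ^ 2) / r := by
  rw [show 1 - (x / r) ^ 2 = (r ^ 2 - x ^ 2) / r ^ 2 by field_simp,
    Real.sqrt_div' _ (sq_nonneg r), Real.sqrt_sq hr.le]

lemma hasDerivAt_A {x r : ℝ} (h : |x| < r) :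
    HasDerivAt (A x) (2 * r * arccos (x / r)) r := by
  have hr : 0 < r := (abs_nonneg x).trans_lt h
  have hxr : |x / r| < 1 := by rwa [abs_div, abs_of_pos hr, div_lt_one hr]
  have hrx : 0 < r ^ 2 - x ^ 2 := sub_pos.2 (sq_lt_sq' (neg_lt_of_abs_lt h) (lt_of_abs_lt h))
  have hquot : HasDerivAt (fun t ↦ x / t) (x * -(r ^ 2)⁻¹) r := by
    simpa [div_eq_mul_inv] using (hasDerivAt_inv hr.ne').const_mul x
  have harccos : HasDerivAt (fun t ↦ arccos (x / t))
      (-(1 / √(1 - (x / r) ^ 2)) * (x * -(r ^ 2)⁻¹)) r :=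
    (Real.hasDerivAt_arccos (neg_lt_of_abs_lt hxr).ne' (lt_of_abs_lt hxr).ne).comp r hquot
  have hsqrt : HasDerivAt (fun t ↦ √(t ^ 2 - x ^ 2)) (1 / (2 * √(r ^ 2 - x ^ 2)) * (2 * r)) r :=
    (Real.hasDerivAt_sqrt hrx.ne').comp r (by simpa using (hasDerivAt_pow 2 r).sub_const (x ^ 2))
  have hsum := ((hasDerivAt_pow 2 r).mul harccos).sub (hsqrt.const_mul x)
  -- the terms `x r / √(r² - x²)` from the arccos and from the square root cancel
  refine hsum.congr_deriv ?_
  have : 0 < √(r ^ 2 - x ^ 2) := Real.sqrt_pos.2 hrx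
  rw [sqrt_one_sub_div_sq hr]
  field_simp
  ring

lemma hasDerivAt_A_sub_A {x₁ x₂ r : ℝ} (h₁ : |x₁| < r) (h₂ : |x₂| < r) :
    HasDerivAt (fun t ↦ A x₁ t - A x₂ t) (2 * r * (arccos (x₁ / r) - arccos (x₂ / r))) r :=
  ((hasDerivAt_A h₁).fun_sub (hasDerivAt_A h₂)).congr_deriv (mul_sub _ _ _).symm

lemma hasDerivAt_Arl {a_r w_r w_x σ x_c r_c : ℝ} (hw_r : 0 ≤ σ * w_r)
    (h₁ : |x_c - σ * w_x| < r_c - σ * w_r) (h₂ : |x_c + σ * w_x| < r_c - σ * w_r) :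
    HasDerivAt (Arl a_r w_r w_x σ x_c)
      (2 * (r_c + σ * w_r) * (arccos ((x_c - σ * w_x) / (r_c + σ * w_r))
          - arccos ((x_c + σ * w_x) / (r_c + σ * w_r)))
        - 2 * (r_c - σ * w_r) * (arccos ((x_c - σ * w_x) / (r_c - σ * w_r))
          - arccos ((x_c + σ * w_x) / (r_c - σ * w_r)))) r_c := by
  have outer := (hasDerivAt_A_sub_A (x₁ := x_c - σ * w_x) (x₂ := x_c + σ * w_x)
    (r := r_c + σ * w_r) (by linarith) (by linarith)).comp_add_const
  have inner := (hasDerivAt_A_sub_A h₁ h₂).comp_sub_const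
  have hArl : Arl a_r w_r w_x σ x_c = fun t ↦
      (A (x_c - σ * w_x) (t + σ * w_r) - A (x_c + σ * w_x) (t + σ * w_r))
        - (A (x_c - σ * w_x) (t - σ * w_r) - A (x_c + σ * w_x) (t - σ * w_r)) := by
    funext t
    simp only [Arl]
    ring
  rw [hArl]
  exact outer.sub inner

theorem ring_line_ratio_independent_of_scale_general (a_r w_r w_x σ x_c : ℝ)
    (hw_r : 0 < w_r) (hw_x : 0 < w_x) (hσ : 0 < σ)
    (hψ : |x_c / σ| + w_x < a_r - w_r) :
    deriv (Arl a_r w_r w_x σ x_c) (σ * a_r) = σ * F a_r w_r w_x (x_c / σ) ∧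
    (deriv (Arl a_r w_r w_x σ x_c) (σ * a_r) = 0 ↔ F a_r w_r w_x (x_c / σ) = 0) := by
  have hbound : |x_c| + σ * w_x < σ * a_r - σ * w_r := by
    rw [abs_div, abs_of_pos hσ] at hψ
    have := (div_lt_iff₀ hσ).1 (lt_sub_iff_add_lt.2 hψ)
    linarith
  have hσw_x : |σ * w_x| = σ * w_x := abs_of_pos (by positivity)
  have h₁ : |x_c - σ * w_x| < σ * a_r - σ * w_r := by linarith [abs_sub x_c (σ * w_x)]
  have h₂ : |x_c + σ * w_x| < σ * a_r - σ * w_r := by linarith [abs_add_le x_c (σ * w_x)]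
  have hx₁ : x_c - σ * w_x = σ * (x_c / σ - w_x) := by field_simp
  have hx₂ : x_c + σ * w_x = σ * (x_c / σ + w_x) := by field_simp
  have hderiv : deriv (Arl a_r w_r w_x σ x_c) (σ * a_r) = σ * F a_r w_r w_x (x_c / σ) := by
    rw [(hasDerivAt_Arl (by positivity) h₁ h₂).deriv, hx₁, hx₂, ← mul_add, ← mul_sub]
    simp only [mul_div_mul_left _ _ hσ.ne', F]
    ring
  exact ⟨hderiv, by rw [hderiv, mul_eq_zero, or_iff_right hσ.ne']⟩

theorem ring_line_ratio_independent_of_scale (a_r w_r w_x σ x_c : ℝ)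
    (hw_r : 0 < w_r) (hwa : w_r < a_r) (hw_x : 0 < w_x) (hσ : 0 < σ)
    (hψ : |x_c / σ| + w_x < a_r - w_r) :
    deriv (Arl a_r w_r w_x σ x_c) (σ * a_r) = σ * F a_r w_r w_x (x_c / σ) ∧
    (deriv (Arl a_r w_r w_x σ x_c) (σ * a_r) = 0 ↔ F a_r w_r w_x (x_c / σ) = 0) :=
  ring_line_ratio_independent_of_scale_general a_r w_r w_x σ x_c hw_r hw_x hσ hψ
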